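/- Let Γ : I → ℝ³ be a C¹ regular space curve observed by two cameras as in the context, with depths ρᵢ > 0, image curves γᵢ satisfying Γ − cᵢ = ρᵢγᵢ, image speeds gᵢ > 0 and unit tangents 𝐭ᵢ, space speed G and unit tangent T. Then for each view i ∈ {1,2}: T = (ρᵢ′/G)γᵢ + (ρᵢgᵢ/G)𝐭ᵢ; consequently, if ⟨γ₁, γ₂ × 𝐭₂⟩ ≠ 0 then ρ₁′/(ρ₁g₁) = −⟨𝐭₁, γ₂ × 𝐭₂⟩/⟨γ₁, γ₂ × 𝐭₂⟩, and if ⟨γ₂, γ₁ × 𝐭₁⟩ ≠ 0 then ρ₂′/(ρ₂g₂) = −⟨𝐭₂, γ₁ × 𝐭₁⟩/⟨γ₂, γ₁ × 𝐭₁⟩. In particular the space tangent T is reconstructed from the corresponding image points and tangents (γ₁, 𝐭₁) and (γ₂, 𝐭₂) without knowledge of the depths. -/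

import Mathlib

open scoped RealInnerProductSpace

noncomputable section

/-- ℝ³ with the Euclidean inner product. -/
abbrev V3 : Type := EuclideanSpace ℝ (Fin 3)

/-- The cross product on ℝ³. -/
def cross3 (u v : V3) : V3 :=
  WithLp.toLp 2 ![u 1 * v 2 - u 2 * v 1, u 2 * v 0 - u 0 * v 2, u 0 * v 1 - u 1 * v 0]

/-!
Differentiating `Γ - cᵢ = ρᵢ γᵢ` gives `Γ' = ρᵢ' γᵢ + ρᵢ gᵢ 𝐭ᵢ` in each view; dividing by `G`
gives `T`. Since the second view puts `Γ'` in the span of `γ₂, 𝐭₂`, it is orthogonal to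
`γ₂ × 𝐭₂`; pairing the first-view decomposition with `γ₂ × 𝐭₂` then gives a linear equation
`ρ₁' ⟨γ₁, γ₂ × 𝐭₂⟩ + ρ₁ g₁ ⟨𝐭₁, γ₂ × 𝐭₂⟩ = 0` for `ρ₁' / (ρ₁ g₁)`, and symmetrically for view 2.
-/

open Matrix

lemma inner_cross3_eq_dotProduct (w u v : V3) :
    ⟪w, cross3 u v⟫ = w.ofLp ⬝ᵥ (u.ofLp ⨯₃ v.ofLp) := by
  rw [EuclideanSpace.inner_eq_star_dotProduct, dotProduct_comm]
  rfl

lemma inner_cross3_eq_zero_of_eq_smul_add_smul {w u v : V3} {a b : ℝ}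
    (hw : w = a • u + b • v) : ⟪w, cross3 u v⟫ = 0 := by
  rw [inner_cross3_eq_dotProduct, hw, WithLp.ofLp_add, WithLp.ofLp_smul, WithLp.ofLp_smul,
    add_dotProduct, smul_dotProduct, smul_dotProduct, dot_self_cross, dot_cross_self]
  simp

section Projection

variable {E : Type*} [NormedAddCommGroup E] [NormedSpace ℝ E]

lemma velocity_eq_of_sub_const_eq_smul {Γ γ : ℝ → E} {ρ : ℝ → ℝ} {c Γ' γ' : E} {ρ' s : ℝ}
    (hproj : ∀ t, Γ t - c = ρ t • γ t) (hΓ : HasDerivAt Γ Γ' s) (hρ : HasDerivAt ρ ρ' s)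
    (hγ : HasDerivAt γ γ' s) : Γ' = ρ' • γ s + ρ s • γ' := by
  have hsub : HasDerivAt (fun t => Γ t - c) Γ' s := hΓ.sub_const c
  rw [funext hproj] at hsub
  rw [add_comm]
  exact hsub.unique (hρ.smul hγ)

lemma velocity_eq_smul_add_smul_unitTangent {Γ γ : ℝ → E} {ρ : ℝ → ℝ} {c Γ' γ' t : E}
    {ρ' g s : ℝ} (hproj : ∀ t, Γ t - c = ρ t • γ t) (hΓ : HasDerivAt Γ Γ' s)
    (hρ : HasDerivAt ρ ρ' s) (hγ : HasDerivAt γ γ' s) (hg : g ≠ 0) (ht : t = g⁻¹ • γ') :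
    Γ' = ρ' • γ s + (ρ s * g) • t := by
  rw [velocity_eq_of_sub_const_eq_smul hproj hΓ hρ hγ, ht, smul_smul, mul_assoc,
    mul_inv_cancel₀ hg, mul_one]

lemma inv_smul_eq_div_smul_add_div_smul {w x y : E} {a b G : ℝ} (hw : w = a • x + b • y) :
    G⁻¹ • w = (a / G) • x + (b / G) • y := by
  rw [hw, smul_add, smul_smul, smul_smul, div_eq_inv_mul, div_eq_inv_mul]

end Projection

lemma div_eq_neg_inner_div_of_inner_eq_zero {F : Type*} [NormedAddCommGroup F]
    [InnerProductSpace ℝ F] {v x y w : F} {a b : ℝ} (hv : v = a • x + b • y) (hvw : ⟪v, w⟫ = 0)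
    (hxw : ⟪x, w⟫ ≠ 0) (hb : b ≠ 0) : a / b = -(⟪y, w⟫ / ⟪x, w⟫) := by
  rw [hv, inner_add_left, real_inner_smul_left, real_inner_smul_left] at hvw
  field_simp
  linarith

theorem tangent_reconstruction_two_views
    (c₁ c₂ : V3)
    (Γ Γ' : ℝ → V3)
    (G : ℝ → ℝ) (T : ℝ → V3)
    (ρ₁ ρ₂ ρ₁' ρ₂' : ℝ → ℝ)
    (γ₁ γ₂ γ₁' γ₂' : ℝ → V3)
    (g₁ g₂ : ℝ → ℝ)
    (t₁ t₂ : ℝ → V3)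
    -- Γ is C¹ and regular
    (hΓ' : ∀ s, HasDerivAt Γ (Γ' s) s)
    (hT : ∀ s, T s = (G s)⁻¹ • Γ' s)
    -- projection in each view, both image curves carrying the parameter of Γ
    (hρ₁pos : ∀ s, 0 < ρ₁ s) (hρ₂pos : ∀ s, 0 < ρ₂ s)
    (hρ₁' : ∀ s, HasDerivAt ρ₁ (ρ₁' s) s)
    (hρ₂' : ∀ s, HasDerivAt ρ₂ (ρ₂' s) s)
    (hproj₁ : ∀ s, Γ s - c₁ = ρ₁ s • γ₁ s)
    (hproj₂ : ∀ s, Γ s - c₂ = ρ₂ s • γ₂ s)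
    -- image apparatus
    (hγ₁' : ∀ s, HasDerivAt γ₁ (γ₁' s) s)
    (hγ₂' : ∀ s, HasDerivAt γ₂ (γ₂' s) s)
    (hg₁pos : ∀ s, 0 < g₁ s) (hg₂pos : ∀ s, 0 < g₂ s)
    (ht₁ : ∀ s, t₁ s = (g₁ s)⁻¹ • γ₁' s)
    (ht₂ : ∀ s, t₂ s = (g₂ s)⁻¹ • γ₂' s) :
    ∀ s,
      T s = (ρ₁' s / G s) • γ₁ s + (ρ₁ s * g₁ s / G s) • t₁ s
      ∧ T s = (ρ₂' s / G s) • γ₂ s + (ρ₂ s * g₂ s / G s) • t₂ s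
      ∧ (⟪γ₁ s, cross3 (γ₂ s) (t₂ s)⟫ ≠ 0 →
          ρ₁' s / (ρ₁ s * g₁ s)
            = -(⟪t₁ s, cross3 (γ₂ s) (t₂ s)⟫ / ⟪γ₁ s, cross3 (γ₂ s) (t₂ s)⟫))
      ∧ (⟪γ₂ s, cross3 (γ₁ s) (t₁ s)⟫ ≠ 0 →
          ρ₂' s / (ρ₂ s * g₂ s)
            = -(⟪t₂ s, cross3 (γ₁ s) (t₁ s)⟫ / ⟪γ₂ s, cross3 (γ₁ s) (t₁ s)⟫)) := by
  intro s
  have hv₁ : Γ' s = ρ₁' s • γ₁ s + (ρ₁ s * g₁ s) • t₁ s :=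
    velocity_eq_smul_add_smul_unitTangent hproj₁ (hΓ' s) (hρ₁' s) (hγ₁' s) (hg₁pos s).ne' (ht₁ s)
  have hv₂ : Γ' s = ρ₂' s • γ₂ s + (ρ₂ s * g₂ s) • t₂ s :=
    velocity_eq_smul_add_smul_unitTangent hproj₂ (hΓ' s) (hρ₂' s) (hγ₂' s) (hg₂pos s).ne' (ht₂ s)
  refine ⟨(hT s).trans (inv_smul_eq_div_smul_add_div_smul hv₁),
    (hT s).trans (inv_smul_eq_div_smul_add_div_smul hv₂), fun hne => ?_, fun hne => ?_⟩
  · exact div_eq_neg_inner_div_of_inner_eq_zero hv₁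
      (inner_cross3_eq_zero_of_eq_smul_add_smul hv₂) hne (mul_pos (hρ₁pos s) (hg₁pos s)).ne'
  · exact div_eq_neg_inner_div_of_inner_eq_zero hv₂
      (inner_cross3_eq_zero_of_eq_smul_add_smul hv₁) hne (mul_pos (hρ₂pos s) (hg₂pos s)).ne'
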